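/- arXiv:2505.20130 — 2 statements merged into one kernel-verified Lean document; each statement's English description precedes it below -/
import Mathlib

section
/- (Surrogate upper bound for first-order interference, Proposition 4.) Let Σ be symmetric with Σ^+_{ii'} = max(Σ_{ii'}, 0), let W be a symmetric 0-1 adjacency matrix with zero diagonal, and let (C_1, C_2) be a partition of {1,...,R}. Assume the decaying covariance condition: for any distinct i_1, i_2, i_3 with W_{i_1 i_2} = 1 and W_{i_1 i_3} = 0, one has Σ_{i_1 i_2} ≥ Σ_{i_1 i_3}. Define I_1 = Σ_{i∈C_1} Σ_{i'∈∂C_2} Σ_{ii'}·𝟙(N_{i'} ∩ C_1 ≠ ∅) + Σ_{i∈C_2} Σ_{i'∈∂C_1} Σ_{ii'}·𝟙(N_{i'} ∩ C_2 ≠ ∅), where N_{i'} = {ℓ : W_{ℓ i'} = 1} ∪ {i'} and ∂C_k is the set of i' ∈ C_k with N_{i'} ∩ (complement of C_k) ≠ ∅. Then I_1 ≤ R · Σ_{i∈C_1} Σ_{i'∈C_2} Σ^+_{ii'} W_{ii'}. -/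
open Finset
open scoped Classical

/-- Neighborhood of a region: itself together with all W-adjacent vertices. -/
noncomputable def nbr {R : ℕ} (W : Matrix (Fin R) (Fin R) ℝ) (j : Fin R) :
    Finset (Fin R) :=
  insert j (Finset.univ.filter fun ℓ => W ℓ j = 1)

/-- Boundary of a cluster: its vertices whose neighborhood leaves the cluster. -/
noncomputable def bdry {R : ℕ} (W : Matrix (Fin R) (Fin R) ℝ)
    (C : Finset (Fin R)) : Finset (Fin R) :=
  C.filter fun j => ((nbr W j) ∩ Cᶜ).Nonempty

/-- First-order interference term for a two-cluster partition (C₁, C₁ᶜ). -/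
noncomputable def I1fun {R : ℕ} (S W : Matrix (Fin R) (Fin R) ℝ)
    (C1 : Finset (Fin R)) : ℝ :=
  (∑ i ∈ C1, ∑ i' ∈ bdry W C1ᶜ,
      S i i' * (if ((nbr W i') ∩ C1).Nonempty then 1 else 0)) +
  (∑ i ∈ C1ᶜ, ∑ i' ∈ bdry W C1,
      S i i' * (if ((nbr W i') ∩ C1ᶜ).Nonempty then 1 else 0))

/-!
Fix a boundary vertex `i'` of one cluster and a vertex `i` of the other cluster `C` that the
neighborhood of `i'` meets. Either `i` is adjacent to `i'`, or some `ℓ ∈ C` adjacent to `i'` is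
closer to it than `i`, and decaying covariance gives `Σ_{ii'} ≤ Σ_{ℓi'}`. In both cases `Σ_{ii'}` is
bounded by the positive cut weight of the edges joining `i'` to `C`. Summing over `i'` bounds the
row of `I₁` indexed by `i` by the total positive cut weight, and there are `R` rows.
-/

section

variable {R : ℕ} {S W : Matrix (Fin R) (Fin R) ℝ}

lemma adj_of_mem_nbr {j ℓ : Fin R} (h : ℓ ∈ nbr W j) (hne : ℓ ≠ j) : W ℓ j = 1 := by
  simpa [nbr, hne] using h

lemma posPart_mul_adj_nonneg (hW01 : ∀ i j, W i j = 0 ∨ W i j = 1) (a b : Fin R) :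
    0 ≤ max (S a b) 0 * W a b :=
  mul_nonneg (le_max_right _ _) (by rcases hW01 a b with h | h <;> simp [h])

noncomputable def cutWeight (S W : Matrix (Fin R) (Fin R) ℝ) (C : Finset (Fin R)) : ℝ :=
  ∑ i ∈ C, ∑ i' ∈ Cᶜ, max (S i i') 0 * W i i'

lemma cutWeight_compl (hS : S.IsSymm) (hW : W.IsSymm) (C : Finset (Fin R)) :
    cutWeight S W Cᶜ = cutWeight S W C := by
  rw [cutWeight, cutWeight, compl_compl, sum_comm]
  refine sum_congr rfl fun i _ => sum_congr rfl fun i' _ => ?_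
  rw [hS.apply, hW.apply]

lemma entry_le_sum_posPart_adj (hS : S.IsSymm) (hW : W.IsSymm)
    (hW01 : ∀ i j, W i j = 0 ∨ W i j = 1)
    (hdecay : ∀ i1 i2 i3 : Fin R, i1 ≠ i2 → i1 ≠ i3 → i2 ≠ i3 →
      W i1 i2 = 1 → W i1 i3 = 0 → S i1 i3 ≤ S i1 i2)
    {C : Finset (Fin R)} {i i' : Fin R} (hi : i ∈ C) (hi' : i' ∉ C)
    (hmeet : (nbr W i' ∩ C).Nonempty) :
    S i i' ≤ ∑ j ∈ C, max (S j i') 0 * W j i' := by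
  have le_of_adj {j : Fin R} (hj : j ∈ C) (hadj : W j i' = 1) (hle : S i i' ≤ S j i') :
      S i i' ≤ ∑ j ∈ C, max (S j i') 0 * W j i' :=
    calc S i i' ≤ max (S j i') 0 * W j i' := by
          rw [hadj, mul_one]; exact hle.trans (le_max_left _ _)
      _ ≤ _ := single_le_sum (fun j _ => posPart_mul_adj_nonneg hW01 j i') hj
  rcases hW01 i i' with hnadj | hadj
  · obtain ⟨ℓ, hℓ⟩ := hmeet
    obtain ⟨hℓn, hℓC⟩ := mem_inter.mp hℓ
    have hℓi' : ℓ ≠ i' := ne_of_mem_of_not_mem hℓC hi'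
    have hWℓ : W ℓ i' = 1 := adj_of_mem_nbr hℓn hℓi'
    have hiℓ : i ≠ ℓ := by rintro rfl; simp [hWℓ] at hnadj
    refine le_of_adj hℓC hWℓ ?_
    calc S i i' = S i' i := (hS.apply i i').symm
      _ ≤ S i' ℓ := hdecay i' ℓ i hℓi'.symm (ne_of_mem_of_not_mem hi hi').symm hiℓ.symm
          (by rwa [hW.apply]) (by rwa [hW.apply])
      _ = S ℓ i' := hS.apply ℓ i'
  · exact le_of_adj hi hadj le_rfl

lemma row_le_cutWeight (hS : S.IsSymm) (hW : W.IsSymm)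
    (hW01 : ∀ i j, W i j = 0 ∨ W i j = 1)
    (hdecay : ∀ i1 i2 i3 : Fin R, i1 ≠ i2 → i1 ≠ i3 → i2 ≠ i3 →
      W i1 i2 = 1 → W i1 i3 = 0 → S i1 i3 ≤ S i1 i2)
    {C : Finset (Fin R)} {i : Fin R} (hi : i ∈ C) :
    ∑ i' ∈ bdry W Cᶜ, S i i' * (if (nbr W i' ∩ C).Nonempty then 1 else 0) ≤
      cutWeight S W C := by
  have hcol : ∀ i', 0 ≤ ∑ j ∈ C, max (S j i') 0 * W j i' := fun i' =>
    sum_nonneg fun j _ => posPart_mul_adj_nonneg hW01 j i'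
  have hbdry : bdry W Cᶜ ⊆ Cᶜ := filter_subset _ _
  calc ∑ i' ∈ bdry W Cᶜ, S i i' * (if (nbr W i' ∩ C).Nonempty then 1 else 0)
      ≤ ∑ i' ∈ bdry W Cᶜ, ∑ j ∈ C, max (S j i') 0 * W j i' := by
        refine sum_le_sum fun i' hi' => ?_
        split_ifs with hmeet
        · rw [mul_one]
          exact entry_le_sum_posPart_adj hS hW hW01 hdecay hi (mem_compl.mp (hbdry hi')) hmeet
        · rw [mul_zero]; exact hcol i'
    _ ≤ ∑ i' ∈ Cᶜ, ∑ j ∈ C, max (S j i') 0 * W j i' :=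
        sum_le_sum_of_subset_of_nonneg hbdry fun i' _ _ => hcol i'
    _ = cutWeight S W C := sum_comm

end

theorem stmt4_general (R : ℕ) (S W : Matrix (Fin R) (Fin R) ℝ)
    (hS : S.IsSymm) (hW : W.IsSymm)
    (hW01 : ∀ i j, W i j = 0 ∨ W i j = 1)
    (C1 : Finset (Fin R))
    (hdecay : ∀ i1 i2 i3 : Fin R, i1 ≠ i2 → i1 ≠ i3 → i2 ≠ i3 →
      W i1 i2 = 1 → W i1 i3 = 0 → S i1 i3 ≤ S i1 i2) :
    I1fun S W C1 ≤ (R : ℝ) * ∑ i ∈ C1, ∑ i' ∈ C1ᶜ, max (S i i') 0 * W i i' := by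
  have h1 := sum_le_card_nsmul C1 _ _ fun i hi =>
    row_le_cutWeight hS hW hW01 hdecay (C := C1) hi
  have h2 := sum_le_card_nsmul C1ᶜ _ _ fun i hi =>
    row_le_cutWeight hS hW hW01 hdecay (C := C1ᶜ) hi
  rw [compl_compl, cutWeight_compl hS hW] at h2
  have hcard : (#C1 : ℝ) + #C1ᶜ = R := by
    rw [← Nat.cast_add, card_add_card_compl, Fintype.card_fin]
  calc I1fun S W C1 ≤ #C1 • cutWeight S W C1 + #C1ᶜ • cutWeight S W C1 := add_le_add h1 h2
    _ = (R : ℝ) * cutWeight S W C1 := by rw [nsmul_eq_mul, nsmul_eq_mul, ← add_mul, hcard]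

/-- Proposition 4: under decaying covariance,
I₁ ≤ R · ∑_{i∈C₁} ∑_{i'∈C₂} Σ⁺_{ii'} W_{ii'}. -/
theorem stmt4 (R : ℕ) (S W : Matrix (Fin R) (Fin R) ℝ)
    (hS : S.IsSymm) (hW : W.IsSymm)
    (hW01 : ∀ i j, W i j = 0 ∨ W i j = 1) (hWdiag : ∀ i, W i i = 0)
    (C1 : Finset (Fin R))
    (hdecay : ∀ i1 i2 i3 : Fin R, i1 ≠ i2 → i1 ≠ i3 → i2 ≠ i3 →
      W i1 i2 = 1 → W i1 i3 = 0 → S i1 i3 ≤ S i1 i2) :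
    I1fun S W C1 ≤ (R : ℝ) * ∑ i ∈ C1, ∑ i' ∈ C1ᶜ, max (S i i') 0 * W i i' :=
  stmt4_general R S W hS hW hW01 C1 hdecay
end

section
/- (Tightness of the surrogate, Proposition 5.) With the setup of the previous statement, suppose additionally that min_{i,i'} Σ_{ii'} = ε > 0. Let d_max = max_{i'} |{ℓ : W_{ℓ i'} = 1}| and σ = (max_{i≠i'} Σ_{ii'}) / (min_{i,i'} Σ_{ii'}). Then R · Σ_{i∈C_1} Σ_{i'∈C_2} Σ^+_{ii'} W_{ii'} ≤ d_max · σ · I_1, where I_1 = Σ_{i∈C_1} Σ_{i'∈∂C_2} Σ_{ii'}·𝟙(N_{i'} ∩ C_1 ≠ ∅) + Σ_{i∈C_2} Σ_{i'∈∂C_1} Σ_{ii'}·𝟙(N_{i'} ∩ C_2 ≠ ∅). -/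
/-!
Every edge crossing the cut `(C₁, C₁ᶜ)` joins a boundary vertex of `C₁` to one of `C₁ᶜ`, and a
vertex meets at most `d_max` edges, each of weight at most `max_{i ≠ i'} Σ`. Hence the cut weight
is at most `d_max · max Σ · |∂C|` for both `C = C₁` and `C = C₁ᶜ`. Splitting `R = |C₁| + |C₁ᶜ|`
bounds `R` times the cut weight by `d_max · max Σ · (|C₁| |∂C₁ᶜ| + |C₁ᶜ| |∂C₁|)`, while every
term of `I₁` indexed by a boundary vertex has indicator `1`, so
`I₁ ≥ min Σ · (|C₁| |∂C₁ᶜ| + |C₁ᶜ| |∂C₁|)`.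
-/

open Finset
open scoped Classical
open scoped Matrix

theorem Finset.sum_mul_le_card_filter_mul {ι : Type*} (s : Finset ι) (f w : ι → ℝ) {a : ℝ}
    (hw : ∀ x ∈ s, w x = 0 ∨ w x = 1) (hf : ∀ x ∈ s, w x = 1 → f x ≤ a) :
    ∑ x ∈ s, f x * w x ≤ #{x ∈ s | w x = 1} * a := by
  rw [← sum_filter_of_ne fun x hx hfw => (hw x hx).resolve_left fun h => hfw (by simp [h])]
  calc ∑ x ∈ s with w x = 1, f x * w x
      ≤ #{x ∈ s | w x = 1} • a :=
        sum_le_card_nsmul _ _ _ fun x hx => by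
          obtain ⟨hxs, hx1⟩ := mem_filter.1 hx
          simpa [hx1] using hf x hxs hx1
    _ = #{x ∈ s | w x = 1} * a := nsmul_eq_mul _ _

theorem Finset.card_mul_card_mul_le_sum_sum {ι κ : Type*} (s : Finset ι) (t : Finset κ)
    (f : ι → κ → ℝ) {b : ℝ} (hf : ∀ x ∈ s, ∀ y ∈ t, b ≤ f x y) :
    #s * #t * b ≤ ∑ x ∈ s, ∑ y ∈ t, f x y := by
  rw [← sum_product' (f := f)]
  calc (#s * #t * b : ℝ) = #(s ×ˢ t) • b := by
        rw [card_product, nsmul_eq_mul]; push_cast; ring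
    _ ≤ ∑ p ∈ s ×ˢ t, f p.1 p.2 := card_nsmul_le_sum _ _ _ fun p hp =>
        hf _ (mem_product.1 hp).1 _ (mem_product.1 hp).2

variable {R : ℕ}

noncomputable def maxDegree (W : Matrix (Fin R) (Fin R) ℝ) : ℕ :=
  univ.sup fun j : Fin R => #{ℓ | W ℓ j = 1}

noncomputable def cutSum (S W : Matrix (Fin R) (Fin R) ℝ) (C : Finset (Fin R)) : ℝ :=
  ∑ i ∈ C, ∑ j ∈ Cᶜ, S i j * W i j

theorem cutSum_transpose_compl {S W : Matrix (Fin R) (Fin R) ℝ} (hW : W.IsSymm)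
    (C : Finset (Fin R)) : cutSum Sᵀ W Cᶜ = cutSum S W C := by
  rw [cutSum, cutSum, compl_compl, sum_comm]
  simp only [Matrix.transpose_apply, hW.apply]

theorem card_filter_adj_le_maxDegree {W : Matrix (Fin R) (Fin R) ℝ} (hW : W.IsSymm)
    (s : Finset (Fin R)) (i : Fin R) : #{j ∈ s | W i j = 1} ≤ maxDegree W :=
  calc #{j ∈ s | W i j = 1} ≤ #{ℓ | W ℓ i = 1} :=
        card_le_card fun j hj => by simpa [hW.apply] using (mem_filter.1 hj).2
    _ ≤ maxDegree W := le_sup (f := fun j : Fin R => #{ℓ | W ℓ j = 1}) (mem_univ i)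

theorem mem_bdry_of_adj {W : Matrix (Fin R) (Fin R) ℝ} {C : Finset (Fin R)} {ℓ j : Fin R}
    (hj : j ∈ C) (hℓ : ℓ ∉ C) (h : W ℓ j = 1) : j ∈ bdry W C :=
  mem_filter.2 ⟨hj, ℓ, mem_inter.2 ⟨by simp [nbr, h], mem_compl.2 hℓ⟩⟩

theorem cutSum_le_card_bdry_mul {S W : Matrix (Fin R) (Fin R) ℝ} (hW : W.IsSymm)
    (hW01 : ∀ i j, W i j = 0 ∨ W i j = 1) (hWdiag : ∀ i, W i i = 0) {a : ℝ} (ha : 0 ≤ a)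
    (hSa : ∀ i j, i ≠ j → S i j ≤ a) (C : Finset (Fin R)) :
    cutSum S W C ≤ #(bdry W C) * (maxDegree W * a) := by
  have hout : ∀ i ∈ C, i ∉ bdry W C → ∑ j ∈ Cᶜ, S i j * W i j = 0 := by
    intro i hi hib
    refine sum_eq_zero fun j hj => ?_
    rcases hW01 i j with h | h
    · simp [h]
    · exact absurd (mem_bdry_of_adj hi (mem_compl.1 hj) (hW.apply i j ▸ h)) hib
  rw [cutSum, ← sum_subset (filter_subset _ C) hout, ← nsmul_eq_mul]
  refine sum_le_card_nsmul _ _ _ fun i _ => ?_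
  calc ∑ j ∈ Cᶜ, S i j * W i j ≤ #{j ∈ Cᶜ | W i j = 1} * a :=
        sum_mul_le_card_filter_mul _ _ _ (fun j _ => hW01 i j) fun j _ hij =>
          hSa i j fun h => by simp [h, hWdiag] at hij
    _ ≤ maxDegree W * a := by
        gcongr
        exact_mod_cast card_filter_adj_le_maxDegree hW _ i

theorem card_compl_mul_card_bdry_mul_le {S W : Matrix (Fin R) (Fin R) ℝ} {b : ℝ}
    (hSb : ∀ i j, b ≤ S i j) (C : Finset (Fin R)) :
    #Cᶜ * #(bdry W C) * b ≤ ∑ i ∈ Cᶜ, ∑ j ∈ bdry W C,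
      S i j * (if ((nbr W j) ∩ Cᶜ).Nonempty then 1 else 0) :=
  card_mul_card_mul_le_sum_sum _ _ _ fun i _ j hj => by
    rw [if_pos (mem_filter.1 hj).2, mul_one]
    exact hSb i j

theorem card_mul_card_bdry_le_I1fun {S W : Matrix (Fin R) (Fin R) ℝ} {b : ℝ}
    (hSb : ∀ i j, b ≤ S i j) (C : Finset (Fin R)) :
    (#C * #(bdry W Cᶜ) + #Cᶜ * #(bdry W C)) * b ≤ I1fun S W C := by
  have hC := card_compl_mul_card_bdry_mul_le (W := W) hSb Cᶜ
  rw [compl_compl] at hC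
  rw [I1fun, add_mul]
  exact add_le_add hC (card_compl_mul_card_bdry_mul_le hSb C)

theorem stmt5_general (R : ℕ) (S W : Matrix (Fin R) (Fin R) ℝ)
    (hW : W.IsSymm)
    (hW01 : ∀ i j, W i j = 0 ∨ W i j = 1) (hWdiag : ∀ i, W i i = 0)
    (C1 : Finset (Fin R))
    (hpos : ∀ i i', 0 < S i i')
    (a b : ℝ)
    (ha : IsGreatest {x : ℝ | ∃ i i' : Fin R, i ≠ i' ∧ S i i' = x} a)
    (hb : IsLeast {x : ℝ | ∃ i i' : Fin R, S i i' = x} b) :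
    (R : ℝ) * (∑ i ∈ C1, ∑ i' ∈ C1ᶜ, max (S i i') 0 * W i i') ≤
      ((Finset.univ.sup fun j : Fin R =>
        (Finset.univ.filter fun ℓ => W ℓ j = 1).card : ℕ) : ℝ) *
      (a / b) * I1fun S W C1 := by
  have hSa : ∀ i j, i ≠ j → S i j ≤ a := fun i j h => ha.2 ⟨i, j, h, rfl⟩
  have hSb : ∀ i j, b ≤ S i j := fun i j => hb.2 ⟨i, j, rfl⟩
  have ha0 : 0 ≤ a := by obtain ⟨i, j, -, rfl⟩ := ha.1; exact (hpos i j).le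
  have hb0 : 0 < b := by obtain ⟨i, j, rfl⟩ := hb.1; exact hpos i j
  have hcut : ∑ i ∈ C1, ∑ i' ∈ C1ᶜ, max (S i i') 0 * W i i' = cutSum S W C1 :=
    sum_congr rfl fun i _ => sum_congr rfl fun j _ => by rw [max_eq_left (hpos i j).le]
  have hC1 := cutSum_le_card_bdry_mul hW hW01 hWdiag ha0 hSa C1
  have hC1c := cutSum_transpose_compl (S := S) hW C1 ▸
    cutSum_le_card_bdry_mul hW hW01 hWdiag ha0 (fun i j h => hSa j i h.symm) C1ᶜ
  have hI1 := card_mul_card_bdry_le_I1fun (W := W) hSb C1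
  have hR : (#C1 + #C1ᶜ : ℝ) = R := by
    exact_mod_cast (card_add_card_compl C1).trans (Fintype.card_fin R)
  change (R : ℝ) * _ ≤ maxDegree W * (a / b) * I1fun S W C1
  rw [hcut, ← hR]
  calc (#C1 + #C1ᶜ : ℝ) * cutSum S W C1
      ≤ #C1 * (#(bdry W C1ᶜ) * (maxDegree W * a)) +
          #C1ᶜ * (#(bdry W C1) * (maxDegree W * a)) := by
        rw [add_mul]; gcongr
    _ = maxDegree W * (a / b) * ((#C1 * #(bdry W C1ᶜ) + #C1ᶜ * #(bdry W C1)) * b) := by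
        field_simp
    _ ≤ maxDegree W * (a / b) * I1fun S W C1 := by gcongr

/-- Proposition 5, tightness: with strictly positive Σ,
R · ∑ Σ⁺ W ≤ d_max · σ · I₁ where σ = max_{i≠i'}Σ_{ii'} / min_{i,i'}Σ_{ii'}. -/
theorem stmt5 (R : ℕ) (S W : Matrix (Fin R) (Fin R) ℝ)
    (hS : S.IsSymm) (hW : W.IsSymm)
    (hW01 : ∀ i j, W i j = 0 ∨ W i j = 1) (hWdiag : ∀ i, W i i = 0)
    (C1 : Finset (Fin R))
    (hdecay : ∀ i1 i2 i3 : Fin R, i1 ≠ i2 → i1 ≠ i3 → i2 ≠ i3 →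
      W i1 i2 = 1 → W i1 i3 = 0 → S i1 i3 ≤ S i1 i2)
    (hpos : ∀ i i', 0 < S i i')
    (a b : ℝ)
    (ha : IsGreatest {x : ℝ | ∃ i i' : Fin R, i ≠ i' ∧ S i i' = x} a)
    (hb : IsLeast {x : ℝ | ∃ i i' : Fin R, S i i' = x} b) :
    (R : ℝ) * (∑ i ∈ C1, ∑ i' ∈ C1ᶜ, max (S i i') 0 * W i i') ≤
      ((Finset.univ.sup fun j : Fin R =>
        (Finset.univ.filter fun ℓ => W ℓ j = 1).card : ℕ) : ℝ) *
      (a / b) * I1fun S W C1 :=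
  stmt5_general R S W hW hW01 hWdiag C1 hpos a b ha hb
end
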